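/- Let P(a,b,c|x,y,z) be a tripartite no-signaling box with inputs x, y, z ∈ {1,2,3} and outcomes a, b, c ∈ {−1,+1}. Define the Alice–Bob correlators ⟨A_xB_y⟩ = Σ_{a,b,c} ab·P(a,b,c|x,y,z) (independent of z by no-signaling) and the Alice–Charlie correlators ⟨A_xC_z⟩ = Σ_{a,b,c} ac·P(a,b,c|x,y,z) (independent of y). Let I_AB = ⟨A_1B_1⟩ − ⟨A_1B_2⟩ − ⟨A_1B_3⟩ + ⟨A_2B_1⟩ + ⟨A_2B_2⟩ − ⟨A_2B_3⟩ + ⟨A_3B_1⟩ + ⟨A_3B_2⟩ + ⟨A_3B_3⟩ and let I_AC be the same expression with B_y replaced by C_z. Then I_AB + I_AC ≤ 10. -/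

import Mathlib

/-- The two-element set of outcomes `{−1, +1}` (as a subtype of `ℤ`). -/
abbrev Sgn : Type := ({-1, 1} : Finset ℤ)

/-- A tripartite no-signaling box with inputs `x, y, z ∈ {1,2,3}` and `±1`-valued
outcomes: nonnegative, normalized, and such that the marginal distribution of the
outcomes of any subset of the parties is independent of the inputs of the
remaining parties. -/
structure NSBox3 where
  P : Fin 3 → Fin 3 → Fin 3 → Sgn → Sgn → Sgn → ℝ
  nonneg : ∀ x y z a b c, 0 ≤ P x y z a b c
  normalized : ∀ x y z, ∑ a : Sgn, ∑ b : Sgn, ∑ c : Sgn, P x y z a b c = 1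
  nsAB : ∀ x y z z' a b, ∑ c : Sgn, P x y z a b c = ∑ c : Sgn, P x y z' a b c
  nsAC : ∀ x y y' z a c, ∑ b : Sgn, P x y z a b c = ∑ b : Sgn, P x y' z a b c
  nsBC : ∀ x x' y z b c, ∑ a : Sgn, P x y z a b c = ∑ a : Sgn, P x' y z a b c
  nsA : ∀ x y y' z z' a,
    ∑ b : Sgn, ∑ c : Sgn, P x y z a b c = ∑ b : Sgn, ∑ c : Sgn, P x y' z' a b c
  nsB : ∀ x x' y z z' b,
    ∑ a : Sgn, ∑ c : Sgn, P x y z a b c = ∑ a : Sgn, ∑ c : Sgn, P x' y z' a b c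
  nsC : ∀ x x' y y' z c,
    ∑ a : Sgn, ∑ b : Sgn, P x y z a b c = ∑ a : Sgn, ∑ b : Sgn, P x' y' z a b c

/-- The Alice–Bob correlator `⟨A_x B_y⟩ = Σ_{a,b,c} ab·P(a,b,c|x,y,z)`
(independent of `z` by no-signaling, here evaluated at `z = 1`). -/
def NSBox3.corrAB (B : NSBox3) (x y : Fin 3) : ℝ :=
  ∑ a : Sgn, ∑ b : Sgn, ∑ c : Sgn, (((a : ℤ) * (b : ℤ) : ℤ) : ℝ) * B.P x y 0 a b c

/-- The Alice–Charlie correlator `⟨A_x C_z⟩ = Σ_{a,b,c} ac·P(a,b,c|x,y,z)`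
(independent of `y` by no-signaling, here evaluated at `y = 1`). -/
def NSBox3.corrAC (B : NSBox3) (x z : Fin 3) : ℝ :=
  ∑ a : Sgn, ∑ b : Sgn, ∑ c : Sgn, (((a : ℤ) * (c : ℤ) : ℤ) : ℝ) * B.P x 0 z a b c

/-- The Alice–Bob XOR-game Bell expression `I_AB`. -/
def NSBox3.IAB (B : NSBox3) : ℝ :=
  B.corrAB 0 0 - B.corrAB 0 1 - B.corrAB 0 2
    + B.corrAB 1 0 + B.corrAB 1 1 - B.corrAB 1 2
    + B.corrAB 2 0 + B.corrAB 2 1 + B.corrAB 2 2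

/-- The Alice–Charlie XOR-game Bell expression `I_AC`. -/
def NSBox3.IAC (B : NSBox3) : ℝ :=
  B.corrAC 0 0 - B.corrAC 0 1 - B.corrAC 0 2
    + B.corrAC 1 0 + B.corrAC 1 1 - B.corrAC 1 2
    + B.corrAC 2 0 + B.corrAC 2 1 + B.corrAC 2 2

/-!
For one joint input `(x, y, z)` and outcomes `a, b, c = ±1`, the pointwise inequality
`(1 - s a b) (1 - t a c) ≥ 0` (with `a² = 1`) gives `s ⟨A_x B_y⟩ + t ⟨A_x C_z⟩ ≤ 1 + s t ⟨B_y C_z⟩`.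
Adding this for two rows `x, x'` with `s t = -s' t'` cancels the Bob–Charlie term. This is Toner's
no-signaling monogamy of CHSH; with both assignments of the two columns to Bob and Charlie it
bounds the total bias of a frustrated `2 × 2` block of the sign matrix by `4`. The six frustrated
blocks cover every cell three times, except `(0,2)`, `(1,0)`, `(2,1)`, which they cover twice and
whose bias is at most `2`. Hence `3 (I_AB + I_AC) ≤ 6 · 4 + 3 · 2`.
-/

theorem Sgn.abs_eq_one (a : Sgn) : |((a : ℤ) : ℝ)| = 1 := by
  rcases Finset.mem_insert.1 a.2 with h | h <;> simp_all

theorem Sgn.sq_eq_one (a : Sgn) : ((a : ℤ) : ℝ) ^ 2 = 1 := by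
  rw [← sq_abs, Sgn.abs_eq_one, one_pow]

theorem Sgn.one_sub_mul_mul_nonneg {s : ℝ} (hs : |s| ≤ 1) (a b : Sgn) :
    0 ≤ 1 - s * (a : ℤ) * (b : ℤ) := by
  have : |s * (a : ℤ) * (b : ℤ)| ≤ 1 := by simpa [abs_mul, Sgn.abs_eq_one] using hs
  linarith [le_abs_self (s * (a : ℤ) * (b : ℤ))]

def xorSign : Matrix (Fin 3) (Fin 3) ℝ :=
  !![1, -1, -1; 1, 1, -1; 1, 1, 1]

theorem abs_xorSign_le_one (x y : Fin 3) : |xorSign x y| ≤ 1 := by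
  fin_cases x <;> fin_cases y <;> simp [xorSign]

namespace NSBox3

variable (B : NSBox3)

def corrBC (y z : Fin 3) : ℝ :=
  ∑ a : Sgn, ∑ b : Sgn, ∑ c : Sgn, (((b : ℤ) * (c : ℤ) : ℤ) : ℝ) * B.P 0 y z a b c

theorem corrAB_eq (x y z : Fin 3) : B.corrAB x y =
    ∑ a : Sgn, ∑ b : Sgn, ∑ c : Sgn, (((a : ℤ) * (b : ℤ) : ℤ) : ℝ) * B.P x y z a b c := by
  simp_rw [corrAB, ← Finset.mul_sum, B.nsAB x y 0 z]

theorem corrAC_eq (x y z : Fin 3) : B.corrAC x z =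
    ∑ a : Sgn, ∑ b : Sgn, ∑ c : Sgn, (((a : ℤ) * (c : ℤ) : ℤ) : ℝ) * B.P x y z a b c := by
  refine Finset.sum_congr rfl fun a _ => ?_
  rw [Finset.sum_comm, Finset.sum_comm (f := fun b c => _ * B.P x y z a b c)]
  simp_rw [← Finset.mul_sum, B.nsAC x 0 y z]

theorem corrBC_eq (x y z : Fin 3) : B.corrBC y z =
    ∑ a : Sgn, ∑ b : Sgn, ∑ c : Sgn, (((b : ℤ) * (c : ℤ) : ℤ) : ℝ) * B.P x y z a b c := by
  rw [corrBC, ← Finset.sum_comm_cycle]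
  conv_rhs => rw [← Finset.sum_comm_cycle]
  simp_rw [← Finset.mul_sum, B.nsBC 0 x y z]

theorem mul_corrAB_add_mul_corrAC_le (x y z : Fin 3) {s t : ℝ} (hs : |s| ≤ 1) (ht : |t| ≤ 1) :
    s * B.corrAB x y + t * B.corrAC x z ≤ 1 + s * t * B.corrBC y z := by
  rw [B.corrAB_eq x y z, B.corrAC_eq x y z, B.corrBC_eq x y z, ← B.normalized x y z]
  simp only [Finset.mul_sum, ← Finset.sum_add_distrib]
  refine Finset.sum_le_sum fun a _ => Finset.sum_le_sum fun b _ => Finset.sum_le_sum fun c _ => ?_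
  push_cast
  linear_combination mul_nonneg (mul_nonneg (Sgn.one_sub_mul_mul_nonneg hs a b)
      (Sgn.one_sub_mul_mul_nonneg ht a c)) (B.nonneg x y z a b c) +
    (s * t * b * c * B.P x y z a b c) * Sgn.sq_eq_one a

theorem chsh_monogamy (x x' y z : Fin 3) {s t s' t' : ℝ} (hs : |s| ≤ 1) (ht : |t| ≤ 1)
    (hs' : |s'| ≤ 1) (ht' : |t'| ≤ 1) (hfrustrated : s * t + s' * t' = 0) :
    s * B.corrAB x y + t * B.corrAC x z + s' * B.corrAB x' y + t' * B.corrAC x' z ≤ 2 := by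
  linear_combination B.mul_corrAB_add_mul_corrAC_le x y z hs ht +
    B.mul_corrAB_add_mul_corrAC_le x' y z hs' ht' + B.corrBC y z * hfrustrated

def bias (x y : Fin 3) : ℝ :=
  xorSign x y * (B.corrAB x y + B.corrAC x y)

theorem IAB_add_IAC_eq_sum_bias : B.IAB + B.IAC = ∑ x, ∑ y, B.bias x y := by
  simp only [IAB, IAC, bias, xorSign, Fin.sum_univ_three, Matrix.of_apply, Matrix.cons_val',
    Matrix.cons_val_fin_one, Matrix.cons_val_zero, Matrix.cons_val_one, Matrix.cons_val]
  ring

theorem bias_le_two (x y : Fin 3) : B.bias x y ≤ 2 := by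
  have hAB := B.mul_corrAB_add_mul_corrAC_le x y 0 (abs_xorSign_le_one x y) (t := 0) (by simp)
  have hAC := B.mul_corrAB_add_mul_corrAC_le x 0 y (s := 0) (by simp) (abs_xorSign_le_one x y)
  simp only [bias]
  linarith

theorem bias_block_le_four {x x' y z : Fin 3}
    (hfrustrated : xorSign x y * xorSign x z + xorSign x' y * xorSign x' z = 0) :
    B.bias x y + B.bias x z + B.bias x' y + B.bias x' z ≤ 4 := by
  have hyz := B.chsh_monogamy x x' y z (abs_xorSign_le_one x y) (abs_xorSign_le_one x z)
    (abs_xorSign_le_one x' y) (abs_xorSign_le_one x' z) hfrustrated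
  have hzy := B.chsh_monogamy x x' z y (abs_xorSign_le_one x z) (abs_xorSign_le_one x y)
    (abs_xorSign_le_one x' z) (abs_xorSign_le_one x' y) (by linear_combination hfrustrated)
  simp only [bias]
  linarith

end NSBox3

/-- No-signaling monogamy of the three-setting XOR game:
for every tripartite no-signaling box, `I_AB + I_AC ≤ 10`. -/
theorem xor_game_ns_monogamy (B : NSBox3) : B.IAB + B.IAC ≤ 10 := by
  have h₁ := B.bias_block_le_four (x := 0) (x' := 1) (y := 0) (z := 1) (by simp [xorSign])
  have h₂ := B.bias_block_le_four (x := 0) (x' := 1) (y := 1) (z := 2) (by simp [xorSign])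
  have h₃ := B.bias_block_le_four (x := 0) (x' := 2) (y := 0) (z := 1) (by simp [xorSign])
  have h₄ := B.bias_block_le_four (x := 0) (x' := 2) (y := 0) (z := 2) (by simp [xorSign])
  have h₅ := B.bias_block_le_four (x := 1) (x' := 2) (y := 0) (z := 2) (by simp [xorSign])
  have h₆ := B.bias_block_le_four (x := 1) (x' := 2) (y := 1) (z := 2) (by simp [xorSign])
  have c₁ := B.bias_le_two 0 2
  have c₂ := B.bias_le_two 1 0
  have c₃ := B.bias_le_two 2 1
  rw [B.IAB_add_IAC_eq_sum_bias]
  simp only [Fin.sum_univ_three]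
  linarith
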